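/- With the setting of the previous identity, assume additionally: (i) ||(V_r^T R)^+ - (V_r^T R)^T||_2 <= eps/sqrt(1-eps), (ii) ||Xbar_r R||_F <= sqrt(1+eps) ||Xbar_r||_F, and (iii) ||(V_r^T R)^T||_2 <= sqrt(1+eps), for some 0 < eps < 1. Then ||B (V_r^T R)^+ - U_r Sigma_r||_F <= (eps * sqrt(1+eps)/sqrt(1-eps) + 1 + eps) ||Xbar_r||_F. -/

import Mathlib

/-!
Full row rank of `M = V_rᵀ R` gives `M M⁺ = 1`, so `X_r R M⁺ = U_r Σ_r` exactly and the residual is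
`X̄_r R M⁺ = X̄_r R (M⁺ - Mᵀ) + X̄_r R Mᵀ`. Each term is bounded by `‖A N‖_F ≤ ‖A‖_F ‖N‖₂`
with `A = X̄_r R`, and the hypotheses bound the three factors.
-/

open Matrix

/-- Frobenius norm of a real matrix. -/
noncomputable def frobNorm {m n : ℕ} (M : Matrix (Fin m) (Fin n) ℝ) : ℝ :=
  Real.sqrt (∑ i, ∑ j, (M i j)^2)

/-- Spectral (operator) norm of a real matrix. -/
noncomputable def specNorm {m n : ℕ} (M : Matrix (Fin m) (Fin n) ℝ) : ℝ :=
  ‖LinearMap.toContinuousLinearMap (Matrix.toEuclideanLin M)‖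

/-- Moore–Penrose pseudoinverse of a full-row-rank matrix: `M⁺ = Mᵀ (M Mᵀ)⁻¹`. -/
noncomputable def pinvFR {k r : ℕ} (M : Matrix (Fin k) (Fin r) ℝ) :
    Matrix (Fin r) (Fin k) ℝ :=
  Mᵀ * (M * Mᵀ)⁻¹

theorem Matrix.isUnit_of_rank_eq_card {n K : Type*} [Fintype n] [DecidableEq n] [Field K]
    {A : Matrix n n K} (h : A.rank = Fintype.card n) : IsUnit A := by
  refine mulVec_surjective_iff_isUnit.mp ((LinearMap.range_eq_top (f := A.mulVecLin)).mp ?_)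
  apply Submodule.eq_top_of_finrank_eq
  rw [← Matrix.rank, h, Module.finrank_fintype_fun_eq_card]

theorem mul_pinvFR_of_rank_eq {k r : ℕ} {M : Matrix (Fin k) (Fin r) ℝ} (h : M.rank = k) :
    M * pinvFR M = 1 := by
  have hunit : IsUnit (M * Mᵀ) :=
    isUnit_of_rank_eq_card (by rw [rank_self_mul_transpose, h, Fintype.card_fin])
  rw [pinvFR, ← Matrix.mul_assoc, mul_nonsing_inv _ ((isUnit_iff_isUnit_det _).mp hunit)]

theorem frobNorm_nonneg {m n : ℕ} (M : Matrix (Fin m) (Fin n) ℝ) : 0 ≤ frobNorm M :=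
  Real.sqrt_nonneg _

theorem frobNorm_sq {m n : ℕ} (M : Matrix (Fin m) (Fin n) ℝ) :
    frobNorm M ^ 2 = ∑ i, ∑ j, M i j ^ 2 :=
  Real.sq_sqrt (by positivity)

theorem frobNorm_transpose {m n : ℕ} (M : Matrix (Fin m) (Fin n) ℝ) :
    frobNorm Mᵀ = frobNorm M := by
  simp only [frobNorm, transpose_apply]
  rw [Finset.sum_comm]

section Frobenius

attribute [local instance] Matrix.frobeniusNormedAddCommGroup

theorem frobNorm_eq_frobenius_norm {m n : ℕ} (M : Matrix (Fin m) (Fin n) ℝ) :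
    frobNorm M = ‖M‖ := by
  simp [frobNorm, frobenius_norm_def, Real.sqrt_eq_rpow]

theorem frobNorm_add_le {m n : ℕ} (A B : Matrix (Fin m) (Fin n) ℝ) :
    frobNorm (A + B) ≤ frobNorm A + frobNorm B := by
  simpa only [frobNorm_eq_frobenius_norm] using norm_add_le A B

end Frobenius

section L2Operator

open scoped Matrix.Norms.L2Operator

theorem specNorm_eq_l2_opNorm {m n : ℕ} (M : Matrix (Fin m) (Fin n) ℝ) : specNorm M = ‖M‖ := rfl

theorem specNorm_nonneg {m n : ℕ} (M : Matrix (Fin m) (Fin n) ℝ) : 0 ≤ specNorm M :=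
  norm_nonneg M

theorem specNorm_transpose {m n : ℕ} (M : Matrix (Fin m) (Fin n) ℝ) :
    specNorm Mᵀ = specNorm M := by
  simpa [specNorm_eq_l2_opNorm] using l2_opNorm_conjTranspose M

theorem sum_sq_mulVec_le {m n : ℕ} (A : Matrix (Fin m) (Fin n) ℝ) (v : Fin n → ℝ) :
    ∑ i, (A *ᵥ v) i ^ 2 ≤ specNorm A ^ 2 * ∑ j, v j ^ 2 := by
  have h := pow_le_pow_left₀ (norm_nonneg _) (l2_opNorm_mulVec A (WithLp.toLp 2 v)) 2
  simpa [EuclideanSpace.real_norm_sq_eq, mul_pow, specNorm_eq_l2_opNorm] using h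

end L2Operator

theorem frobNorm_mul_le_specNorm_mul {l m n : ℕ} (A : Matrix (Fin l) (Fin m) ℝ)
    (B : Matrix (Fin m) (Fin n) ℝ) :
    frobNorm (A * B) ≤ specNorm A * frobNorm B := by
  have hcol : ∀ j, ∑ i, (A * B) i j ^ 2 ≤ specNorm A ^ 2 * ∑ i, B i j ^ 2 :=
    fun j => sum_sq_mulVec_le A (fun i => B i j)
  have hsq : frobNorm (A * B) ^ 2 ≤ (specNorm A * frobNorm B) ^ 2 := by
    rw [mul_pow, frobNorm_sq, frobNorm_sq, Finset.sum_comm, Finset.sum_comm (γ := Fin m),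
      Finset.mul_sum]
    exact Finset.sum_le_sum fun j _ => hcol j
  exact pow_le_pow_iff_left₀ (frobNorm_nonneg _)
    (mul_nonneg (specNorm_nonneg _) (frobNorm_nonneg _)) two_ne_zero |>.mp hsq

theorem frobNorm_mul_le_mul_specNorm {l m n : ℕ} (A : Matrix (Fin l) (Fin m) ℝ)
    (B : Matrix (Fin m) (Fin n) ℝ) :
    frobNorm (A * B) ≤ frobNorm A * specNorm B := by
  simpa only [← transpose_mul, frobNorm_transpose, specNorm_transpose, mul_comm (frobNorm A)]
    using frobNorm_mul_le_specNorm_mul Bᵀ Aᵀ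

theorem sketch_pinv_frob_bound_general (D N r n : ℕ) (ε : ℝ) (hε : 0 < ε)
    (X Xr Xbar : Matrix (Fin D) (Fin N) ℝ)
    (Ur : Matrix (Fin D) (Fin r) ℝ) (dr : Fin r → ℝ) (Vr : Matrix (Fin N) (Fin r) ℝ)
    (R : Matrix (Fin N) (Fin n) ℝ)
    (hXr : Xr = Ur * Matrix.diagonal dr * Vrᵀ)
    (hX : X = Xr + Xbar)
    (hfr : (Vrᵀ * R).rank = r)
    (hi : specNorm (pinvFR (Vrᵀ * R) - (Vrᵀ * R)ᵀ) ≤ ε / Real.sqrt (1 - ε))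
    (hii : frobNorm (Xbar * R) ≤ Real.sqrt (1 + ε) * frobNorm Xbar)
    (hiii : specNorm ((Vrᵀ * R)ᵀ) ≤ Real.sqrt (1 + ε)) :
    frobNorm ((X * R) * pinvFR (Vrᵀ * R) - Ur * Matrix.diagonal dr) ≤
      (ε * Real.sqrt (1 + ε) / Real.sqrt (1 - ε) + 1 + ε) * frobNorm Xbar := by
  set M := Vrᵀ * R
  set P := pinvFR M
  have hMP : M * P = 1 := mul_pinvFR_of_rank_eq hfr
  have hsignal : Xr * R * P = Ur * diagonal dr := by
    simp only [hXr, Matrix.mul_assoc]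
    rw [← Matrix.mul_assoc Vrᵀ, hMP, Matrix.mul_one]
  have hresidual : X * R * P - Ur * diagonal dr = Xbar * R * (P - Mᵀ) + Xbar * R * Mᵀ := by
    rw [hX, Matrix.add_mul, Matrix.add_mul, hsignal, add_sub_cancel_left, ← Matrix.mul_add,
      sub_add_cancel]
  have hXbarR : 0 ≤ Real.sqrt (1 + ε) * frobNorm Xbar :=
    mul_nonneg (Real.sqrt_nonneg _) (frobNorm_nonneg _)
  rw [hresidual]
  calc _ ≤ frobNorm (Xbar * R) * specNorm (P - Mᵀ) + frobNorm (Xbar * R) * specNorm Mᵀ :=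
        (frobNorm_add_le _ _).trans
          (add_le_add (frobNorm_mul_le_mul_specNorm _ _) (frobNorm_mul_le_mul_specNorm _ _))
    _ ≤ Real.sqrt (1 + ε) * frobNorm Xbar * (ε / Real.sqrt (1 - ε)) +
          Real.sqrt (1 + ε) * frobNorm Xbar * Real.sqrt (1 + ε) :=
        add_le_add (mul_le_mul hii hi (specNorm_nonneg _) hXbarR)
          (mul_le_mul hii hiii (specNorm_nonneg _) hXbarR)
    _ = _ := by
        have hsqrt := Real.mul_self_sqrt (show 0 ≤ 1 + ε by linarith)
        linear_combination frobNorm Xbar * hsqrt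

/-- with `X = X_r + Xbar_r`, `X_r = U_r Σ_r V_rᵀ`, `V_rᵀ R` of full row
rank `r`, and the bounds (i) `‖(V_rᵀR)⁺ - (V_rᵀR)ᵀ‖₂ ≤ ε/√(1-ε)`,
(ii) `‖Xbar_r R‖_F ≤ √(1+ε) ‖Xbar_r‖_F`, (iii) `‖(V_rᵀR)ᵀ‖₂ ≤ √(1+ε)`, for `0 < ε < 1`:
`‖B (V_rᵀR)⁺ - U_r Σ_r‖_F ≤ (ε √(1+ε)/√(1-ε) + 1 + ε) ‖Xbar_r‖_F` with `B = X R`. -/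
theorem sketch_pinv_frob_bound (D N r n : ℕ) (ε : ℝ) (hε : 0 < ε) (hε1 : ε < 1)
    (X Xr Xbar : Matrix (Fin D) (Fin N) ℝ)
    (Ur : Matrix (Fin D) (Fin r) ℝ) (dr : Fin r → ℝ) (Vr : Matrix (Fin N) (Fin r) ℝ)
    (R : Matrix (Fin N) (Fin n) ℝ)
    (hUr : Urᵀ * Ur = 1) (hVr : Vrᵀ * Vr = 1)
    (hXr : Xr = Ur * Matrix.diagonal dr * Vrᵀ)
    (hX : X = Xr + Xbar)
    (hfr : (Vrᵀ * R).rank = r)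
    (hi : specNorm (pinvFR (Vrᵀ * R) - (Vrᵀ * R)ᵀ) ≤ ε / Real.sqrt (1 - ε))
    (hii : frobNorm (Xbar * R) ≤ Real.sqrt (1 + ε) * frobNorm Xbar)
    (hiii : specNorm ((Vrᵀ * R)ᵀ) ≤ Real.sqrt (1 + ε)) :
    frobNorm ((X * R) * pinvFR (Vrᵀ * R) - Ur * Matrix.diagonal dr) ≤
      (ε * Real.sqrt (1 + ε) / Real.sqrt (1 - ε) + 1 + ε) * frobNorm Xbar :=
  sketch_pinv_frob_bound_general D N r n ε hε X Xr Xbar Ur dr Vr R hXr hX hfr hi hii hiii
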